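/- Let H = ℚ[x_1, x_2, …] be the polynomial algebra on countably many commuting variables, with the convention x_0 := 1. Define the ℚ-algebra homomorphism Δ : H → H ⊗_ℚ H on generators by Δ(x_n) := Σ_{k=0}^{n} W_{n,k} ⊗ x_k, where W_{n,k} ∈ H is the commutative partial Bell polynomial B_{n+1,k+1} under the substitution d_j ↦ x_{j−1} (so d_1 ↦ 1), and define the ℚ-algebra homomorphism ε : H → ℚ by ε(x_n) = 0 for all n ≥ 1. Then Δ is coassociative, (Δ ⊗ id) ∘ Δ = (id ⊗ Δ) ∘ Δ, and ε is a counit for Δ: (ε ⊗ id) ∘ Δ = id = (id ⊗ ε) ∘ Δ. (This is the coproduct of the Faà di Bruno Hopf algebra.) -/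

import Mathlib

open Finset MvPolynomial TensorProduct

/-- The (commutative) partial Bell polynomials. -/
noncomputable def pBell {A : Type*} [Ring A] (d : ℕ → A) : ℕ → ℕ → A
  | 0, 0 => 1
  | _ + 1, 0 => 0
  | 0, _ + 1 => 0
  | n + 1, k + 1 =>
      ∑ j ∈ Finset.range (n + 1), (n.choose j : A) * (pBell d (n - j) k * d (j + 1))
  termination_by _ k => k

/-- `xv n` is `x_n` in `H = ℚ[x_1, x_2, …]`, with the convention `x_0 = 1`;
the variable `X m` of `MvPolynomial ℕ ℚ` stands for `x_{m+1}`. -/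
noncomputable def xv : ℕ → MvPolynomial ℕ ℚ :=
  fun n => if n = 0 then 1 else MvPolynomial.X (n - 1)

/-- The rank polynomial `W_{n,k}`: the commutative partial Bell polynomial `B_{n+1,k+1}`
under the substitution `d_j ↦ x_{j-1}` (so `d_1 ↦ 1`). -/
noncomputable def Wfdb (n k : ℕ) : MvPolynomial ℕ ℚ :=
  pBell (fun j => xv (j - 1)) (n + 1) (k + 1)

/-- The Faà di Bruno coproduct, the algebra map determined by
`Δ(x_n) = ∑_{k=0}^{n} W_{n,k} ⊗ x_k` (the generator `X m` being `x_{m+1}`). -/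
noncomputable def Δfdb :
    MvPolynomial ℕ ℚ →ₐ[ℚ] (MvPolynomial ℕ ℚ) ⊗[ℚ] (MvPolynomial ℕ ℚ) :=
  MvPolynomial.aeval (fun n => ∑ k ∈ Finset.range (n + 2), Wfdb (n + 1) k ⊗ₜ[ℚ] xv k)

/-- The counit, the algebra map with `ε(x_n) = 0` for `n ≥ 1`. -/
noncomputable def εfdb : MvPolynomial ℕ ℚ →ₐ[ℚ] ℚ :=
  MvPolynomial.aeval (fun _ => (0 : ℚ))

/-!
For a sequence `d` in a commutative `ℚ`-algebra write `E_k = ∑ₙ B_{n,k}(d) tⁿ/n!`. The recursion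
defining the partial Bell polynomials says `E_{k+1}' = E_k · E_1'`, hence `E_1^k = k! E_k` and
`E_a E_b = C(a+b,b) E_{a+b}`; comparing coefficients in `E_a E_{b+1}' = C(a+b,b) E_{a+b+1}'` gives
`∑_j C(n,j) B_{n-j,a} B_{j+1,b+1} = C(a+b,b) B_{n+1,a+b+1}`.

Using this identity, induction on `k` shows that any algebra map `δ` with
`δ(B_{n,1}) = ∑_m B_{n,m} ⊗ B_{m,1}` satisfies `δ(B_{n,k}) = ∑_m B_{n,m} ⊗ B_{m,k}`: the matrix
`(B_{n,k})` is a comatrix for `δ`. For `d_j = x_{j-1}` the generator `x_n` is `B_{n+1,1}`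
and `Δ` is such a map, so coassociativity becomes the equality of the two ways of summing
`B_{n,l} ⊗ B_{l,m} ⊗ B_{m,k}`, and the counit axioms follow from `ε(B_{n,k}) = [n = k]`.
-/

open scoped Nat

section pBell

variable {A : Type*} [Ring A] (d : ℕ → A)

@[simp] lemma pBell_zero_zero : pBell d 0 0 = 1 := by rw [pBell]
@[simp] lemma pBell_succ_zero (n : ℕ) : pBell d (n + 1) 0 = 0 := by rw [pBell]
@[simp] lemma pBell_zero_succ (k : ℕ) : pBell d 0 (k + 1) = 0 := by rw [pBell]

lemma pBell_succ_succ (n k : ℕ) : pBell d (n + 1) (k + 1) =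
    ∑ j ∈ range (n + 1), (n.choose j : A) * (pBell d (n - j) k * d (j + 1)) := by
  rw [pBell]

lemma pBell_eq_zero_of_lt {n k : ℕ} (h : n < k) : pBell d n k = 0 := by
  induction k generalizing n with
  | zero => omega
  | succ k ih =>
    cases n with
    | zero => exact pBell_zero_succ d k
    | succ n =>
      rw [pBell_succ_succ]
      exact sum_eq_zero fun j _ => by rw [ih (by omega), zero_mul, mul_zero]

lemma pBell_succ_one (n : ℕ) : pBell d (n + 1) 1 = d (n + 1) := by
  rw [pBell_succ_succ, sum_eq_single_of_mem n (self_mem_range_succ n)]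
  · simp
  · intro j hj hjn
    obtain ⟨m, hm⟩ : ∃ m, n - j = m + 1 := ⟨n - j - 1, by grind⟩
    rw [hm, pBell_succ_zero, zero_mul, mul_zero]

lemma map_pBell {B F : Type*} [Ring B] [FunLike F A B] [RingHomClass F A B] (f : F) (n k : ℕ) :
    f (pBell d n k) = pBell (f ∘ d) n k := by
  induction k generalizing n with
  | zero => cases n <;> simp
  | succ k ih =>
    cases n with
    | zero => simp
    | succ n => simp [pBell_succ_succ, ih]

lemma pBell_eq_ite (h₁ : d 1 = 1) (h₂ : ∀ j ≥ 2, d j = 0) (n k : ℕ) :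
    pBell d n k = if n = k then 1 else 0 := by
  induction k generalizing n with
  | zero => cases n <;> simp
  | succ k ih =>
    cases n with
    | zero => simp
    | succ n =>
      rw [pBell_succ_succ, sum_eq_single_of_mem 0 (mem_range.2 n.succ_pos)]
      · simp [ih, h₁]
      · intro j _ hj
        rw [h₂ (j + 1) (by omega), mul_zero, mul_zero]

end pBell

section Egf

open PowerSeries

variable {A : Type*} [CommRing A] [Algebra ℚ A]

noncomputable def egf (u : ℕ → A) : A⟦X⟧ := mk fun n => (n ! : ℚ)⁻¹ • u n

lemma coeff_egf (u : ℕ → A) (n : ℕ) : coeff n (egf u) = (n ! : ℚ)⁻¹ • u n := coeff_mk _ _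

lemma egf_injective : Function.Injective (egf : (ℕ → A) → A⟦X⟧) := by
  intro u v h
  funext n
  have := congrArg (coeff n) h
  rwa [coeff_egf, coeff_egf, smul_right_inj (by positivity)] at this

lemma egf_smul (q : ℚ) (u : ℕ → A) : q • egf u = egf (q • u) := by
  ext n
  simp only [PowerSeries.coeff_smul, coeff_egf, Pi.smul_apply, smul_comm q]

lemma egf_mul (u v : ℕ → A) : egf u * egf v =
    egf fun n => ∑ j ∈ range (n + 1), (n.choose j : A) * (u (n - j) * v j) := by
  ext n
  rw [mul_comm, PowerSeries.coeff_mul,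
    Nat.sum_antidiagonal_eq_sum_range_succ fun i j => coeff i (egf v) * coeff j (egf u),
    coeff_egf, smul_sum]
  refine sum_congr rfl fun j hj => ?_
  have hj : j ≤ n := Nat.lt_succ_iff.1 (mem_range.1 hj)
  rw [coeff_egf, coeff_egf, smul_mul_smul_comm, mul_comm (v j), ← nsmul_eq_mul,
    ← Nat.cast_smul_eq_nsmul ℚ, smul_smul, Nat.cast_choose ℚ hj]
  congr 1
  field_simp

lemma derivative_egf (u : ℕ → A) : d⁄dX A (egf u) = egf fun n => u (n + 1) := by
  ext n
  rw [coeff_derivative, coeff_egf, coeff_egf, Nat.factorial_succ, mul_comm, ← Nat.cast_add_one,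
    ← nsmul_eq_mul, ← Nat.cast_smul_eq_nsmul ℚ, smul_smul]
  congr 1
  push_cast
  field_simp

variable (d : ℕ → A)

lemma egf_pBell_zero : egf (pBell d · 0) = 1 := by
  ext n
  cases n <;> simp [coeff_egf, PowerSeries.coeff_one]

lemma constantCoeff_egf_pBell_succ (k : ℕ) : constantCoeff (egf (pBell d · (k + 1))) = 0 := by
  rw [← coeff_zero_eq_constantCoeff_apply, coeff_egf, pBell_zero_succ, smul_zero]

lemma derivative_egf_pBell_succ (k : ℕ) :
    d⁄dX A (egf (pBell d · (k + 1))) = egf (pBell d · k) * d⁄dX A (egf (pBell d · 1)) := by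
  rw [derivative_egf, derivative_egf, egf_mul]
  simp only [pBell_succ_one, pBell_succ_succ _ _ k]

lemma egf_pBell_one_pow (k : ℕ) : egf (pBell d · 1) ^ k = (k ! : ℚ) • egf (pBell d · k) := by
  have : IsAddTorsionFree A := .of_module_rat A
  induction k with
  | zero => rw [pow_zero, egf_pBell_zero, Nat.factorial_zero, Nat.cast_one, one_smul]
  | succ k ih =>
    refine derivative.ext ?_ ?_
    · rw [Derivation.leibniz_pow, Nat.add_sub_cancel, ih, Derivation.map_smul_of_tower,
        derivative_egf_pBell_succ d k, Nat.factorial_succ, smul_eq_mul, smul_mul_assoc,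
        ← Nat.cast_smul_eq_nsmul ℚ, smul_smul, Nat.cast_mul, Nat.cast_succ]
    · rw [map_pow, constantCoeff_egf_pBell_succ, zero_pow k.succ_ne_zero,
        ← coeff_zero_eq_constantCoeff_apply, PowerSeries.coeff_smul,
        coeff_zero_eq_constantCoeff_apply, constantCoeff_egf_pBell_succ, smul_zero]

lemma egf_pBell_mul (a b : ℕ) : egf (pBell d · a) * egf (pBell d · b) =
    ((a + b).choose b : ℚ) • egf (pBell d · (a + b)) := by
  have hab : ((a ! * b ! : ℕ) : ℚ) ≠ 0 := by positivity
  refine smul_right_injective A⟦X⟧ hab ?_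
  dsimp only
  rw [smul_smul, ← Nat.cast_mul, show a ! * b ! * (a + b).choose b = (a + b)! by
      rw [← Nat.add_choose_mul_factorial_mul_factorial]; ring,
    ← egf_pBell_one_pow, pow_add, egf_pBell_one_pow, egf_pBell_one_pow, smul_mul_smul_comm,
    Nat.cast_mul]

lemma sum_choose_mul_pBell_mul_pBell (n a b : ℕ) :
    ∑ j ∈ range (n + 1), (n.choose j : A) * (pBell d (n - j) a * pBell d (j + 1) (b + 1)) =
      ((a + b).choose b : A) * pBell d (n + 1) (a + b + 1) := by
  have key : egf (pBell d · a) * d⁄dX A (egf (pBell d · (b + 1))) =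
      ((a + b).choose b : ℚ) • d⁄dX A (egf (pBell d · (a + b + 1))) := by
    rw [derivative_egf_pBell_succ d b, derivative_egf_pBell_succ d (a + b), ← mul_assoc,
      egf_pBell_mul, smul_mul_assoc]
  rw [derivative_egf, derivative_egf, egf_mul, egf_smul] at key
  have := congr_fun (egf_injective key) n
  rw [this, Pi.smul_apply, Nat.cast_smul_eq_nsmul, nsmul_eq_mul]

end Egf

section Comatrix

variable {A : Type*} [CommRing A] [Algebra ℚ A] (d : ℕ → A)

lemma sum_range_pBell_tmul {M : Type*} [AddCommMonoid M] [Module ℚ M] {n N : ℕ} (hN : n < N)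
    (y : ℕ → M) :
    ∑ m ∈ range N, pBell d n m ⊗ₜ[ℚ] y m = ∑ m ∈ range (n + 1), pBell d n m ⊗ₜ[ℚ] y m :=
  eventually_constant_sum (fun m hm => by rw [pBell_eq_zero_of_lt _ hm, zero_tmul]) hN

lemma sum_pBell_tmul_pBell_succ (n k : ℕ) :
    ∑ m ∈ range (n + 2), pBell d (n + 1) m ⊗ₜ[ℚ] pBell d m (k + 1) =
      ∑ b ∈ range (n + 1), ∑ a ∈ range (n + 1),
        ((a + b).choose b * pBell d (n + 1) (a + b + 1)) ⊗ₜ[ℚ] (pBell d a k * pBell d (b + 1) 1) := by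
  set f : ℕ → ℕ → A ⊗[ℚ] A := fun b a =>
    ((a + b).choose b * pBell d (n + 1) (a + b + 1)) ⊗ₜ[ℚ] (pBell d a k * pBell d (b + 1) 1)
  calc _ = ∑ m ∈ range (n + 1), ∑ b ∈ range (m + 1), f b (m - b) := by
        rw [sum_range_succ', pBell_zero_succ, tmul_zero, add_zero]
        refine sum_congr rfl fun m _ => ?_
        rw [pBell_succ_succ d m k, tmul_sum]
        refine sum_congr rfl fun b hb => ?_
        simp only [f]
        rw [Nat.sub_add_cancel (Nat.lt_succ_iff.1 (mem_range.1 hb)), pBell_succ_one,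
          ← nsmul_eq_mul, ← nsmul_eq_mul, smul_tmul]
    _ = ∑ b ∈ range (n + 1), ∑ a ∈ range (n + 1 - b), f b a := sum_range_diag_flip _ _
    _ = _ := by
        refine sum_congr rfl fun b _ => (eventually_constant_sum (fun a ha => ?_) (by omega)).symm
        simp only [f]
        rw [pBell_eq_zero_of_lt _ (by omega), mul_zero, zero_tmul]

lemma map_pBell_eq_sum_tmul (δ : A →ₐ[ℚ] A ⊗[ℚ] A)
    (hδ : ∀ n, δ (pBell d n 1) = ∑ m ∈ range (n + 1), pBell d n m ⊗ₜ[ℚ] pBell d m 1) (n k : ℕ) :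
    δ (pBell d n k) = ∑ m ∈ range (n + 1), pBell d n m ⊗ₜ[ℚ] pBell d m k := by
  induction k generalizing n with
  | zero =>
    simp only [sum_range_succ', pBell_succ_zero, tmul_zero, sum_const_zero, zero_add,
      pBell_zero_zero]
    cases n <;> simp [Algebra.TensorProduct.one_def]
  | succ k ih =>
    cases n with
    | zero => simp
    | succ n =>
      have hrec := sum_choose_mul_pBell_mul_pBell d n k 0
      simp only [add_zero, zero_add, Nat.choose_zero_right, Nat.cast_one, one_mul] at hrec
      rw [← hrec, map_sum, sum_pBell_tmul_pBell_succ, sum_comm]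
      calc _ = ∑ j ∈ range (n + 1), ∑ a ∈ range (n + 1), ∑ c ∈ range (n + 2),
            ((n.choose j : A) * (pBell d (n - j) a * pBell d (j + 1) c)) ⊗ₜ[ℚ]
              (pBell d a k * pBell d c 1) := by
            refine sum_congr rfl fun j hj => ?_
            have hj := mem_range.1 hj
            rw [map_mul, map_mul, map_natCast, ih, hδ,
              ← sum_range_pBell_tmul d (n := n - j) (N := n + 1) (by omega),
              ← sum_range_pBell_tmul d (n := j + 1) (N := n + 2) (by omega), sum_mul_sum,
              ← nsmul_eq_mul, smul_sum]
            refine sum_congr rfl fun a _ => ?_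
            rw [smul_sum]
            refine sum_congr rfl fun c _ => ?_
            rw [Algebra.TensorProduct.tmul_mul_tmul, smul_tmul', nsmul_eq_mul]
        _ = ∑ a ∈ range (n + 1), ∑ c ∈ range (n + 2),
            (∑ j ∈ range (n + 1), (n.choose j : A) * (pBell d (n - j) a * pBell d (j + 1) c)) ⊗ₜ[ℚ]
              (pBell d a k * pBell d c 1) := by
            rw [sum_comm]
            refine sum_congr rfl fun a _ => ?_
            rw [sum_comm]
            simp only [sum_tmul]
        _ = _ := by
            refine sum_congr rfl fun a _ => ?_
            rw [sum_range_succ', pBell_zero_succ, mul_zero, tmul_zero, add_zero]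
            simp only [sum_choose_mul_pBell_mul_pBell]

lemma assoc_map_pBell (δ : A →ₐ[ℚ] A ⊗[ℚ] A)
    (hδ : ∀ n k, δ (pBell d n k) = ∑ m ∈ range (n + 1), pBell d n m ⊗ₜ[ℚ] pBell d m k) (n k : ℕ) :
    Algebra.TensorProduct.assoc ℚ ℚ ℚ A A A
        (Algebra.TensorProduct.map δ (AlgHom.id ℚ A) (δ (pBell d n k))) =
      Algebra.TensorProduct.map (AlgHom.id ℚ A) δ (δ (pBell d n k)) := by
  simp only [hδ, map_sum, Algebra.TensorProduct.map_tmul, AlgHom.id_apply, sum_tmul, tmul_sum,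
    Algebra.TensorProduct.assoc_tmul]
  rw [sum_comm]
  refine sum_congr rfl fun l hl => eventually_constant_sum (fun m hm => ?_) (mem_range.1 hl)
  rw [pBell_eq_zero_of_lt _ hm, zero_tmul, tmul_zero]

lemma lid_map_pBell (δ : A →ₐ[ℚ] A ⊗[ℚ] A)
    (hδ : ∀ n k, δ (pBell d n k) = ∑ m ∈ range (n + 1), pBell d n m ⊗ₜ[ℚ] pBell d m k)
    (ε : A →ₐ[ℚ] ℚ) (hε₁ : ε (d 1) = 1) (hε₂ : ∀ j ≥ 2, ε (d j) = 0) (n k : ℕ) :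
    Algebra.TensorProduct.lid ℚ A
        (Algebra.TensorProduct.map ε (AlgHom.id ℚ A) (δ (pBell d n k))) = pBell d n k := by
  simp only [hδ, map_sum, Algebra.TensorProduct.map_tmul, Algebra.TensorProduct.lid_tmul,
    map_pBell, pBell_eq_ite (ε ∘ d) hε₁ hε₂]
  simp

lemma rid_map_pBell (δ : A →ₐ[ℚ] A ⊗[ℚ] A)
    (hδ : ∀ n k, δ (pBell d n k) = ∑ m ∈ range (n + 1), pBell d n m ⊗ₜ[ℚ] pBell d m k)
    (ε : A →ₐ[ℚ] ℚ) (hε₁ : ε (d 1) = 1) (hε₂ : ∀ j ≥ 2, ε (d j) = 0) (n k : ℕ) :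
    Algebra.TensorProduct.rid ℚ ℚ A
        (Algebra.TensorProduct.map (AlgHom.id ℚ A) ε (δ (pBell d n k))) = pBell d n k := by
  simp only [hδ, map_sum, Algebra.TensorProduct.map_tmul, Algebra.TensorProduct.rid_tmul,
    map_pBell, pBell_eq_ite (ε ∘ d) hε₁ hε₂]
  simpa using fun h => (pBell_eq_zero_of_lt d h).symm

end Comatrix

section FaaDiBruno

local notation "H" => MvPolynomial ℕ ℚ
local notation "𝔅" => pBell fun j => xv (j - 1)

lemma pBell_xv_succ_one (n : ℕ) : 𝔅 (n + 1) 1 = xv n := pBell_succ_one _ n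

lemma pBell_xv_succ_succ_one (n : ℕ) : 𝔅 (n + 2) 1 = X n := pBell_succ_one _ (n + 1)

lemma Δfdb_pBell_one (n : ℕ) : Δfdb (𝔅 n 1) = ∑ m ∈ range (n + 1), 𝔅 n m ⊗ₜ[ℚ] 𝔅 m 1 := by
  match n with
  | 0 => simp
  | 1 =>
    rw [sum_range_succ, sum_range_one, pBell_zero_succ, tmul_zero, zero_add, pBell_xv_succ_one,
      xv, if_pos rfl, map_one, Algebra.TensorProduct.one_def]
  | n + 2 =>
    rw [pBell_xv_succ_succ_one, Δfdb, aeval_X, sum_range_succ' _ (n + 2), pBell_zero_succ,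
      tmul_zero, add_zero]
    exact sum_congr rfl fun k _ => by rw [pBell_xv_succ_one]; rfl

lemma Δfdb_pBell (n k : ℕ) : Δfdb (𝔅 n k) = ∑ m ∈ range (n + 1), 𝔅 n m ⊗ₜ[ℚ] 𝔅 m k :=
  map_pBell_eq_sum_tmul _ Δfdb Δfdb_pBell_one n k

lemma εfdb_xv_zero : εfdb (xv 0) = 1 := by rw [xv, if_pos rfl, map_one]

lemma εfdb_xv_of_ne_zero {n : ℕ} (hn : n ≠ 0) : εfdb (xv n) = 0 := by
  rw [xv, if_neg hn, εfdb, aeval_X]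

lemma Δfdb_coassoc :
    (Algebra.TensorProduct.assoc ℚ ℚ ℚ H H H).toAlgHom.comp
        ((Algebra.TensorProduct.map Δfdb (AlgHom.id ℚ H)).comp Δfdb) =
      (Algebra.TensorProduct.map (AlgHom.id ℚ H) Δfdb).comp Δfdb := by
  refine algHom_ext fun n => ?_
  rw [← pBell_xv_succ_succ_one]
  exact assoc_map_pBell _ Δfdb Δfdb_pBell _ _

lemma εfdb_lid_counit :
    (Algebra.TensorProduct.lid ℚ H).toAlgHom.comp
        ((Algebra.TensorProduct.map εfdb (AlgHom.id ℚ H)).comp Δfdb) = AlgHom.id ℚ H := by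
  refine algHom_ext fun n => ?_
  rw [← pBell_xv_succ_succ_one]
  exact lid_map_pBell _ Δfdb Δfdb_pBell εfdb εfdb_xv_zero
    (fun j hj => εfdb_xv_of_ne_zero (by omega)) _ _

lemma εfdb_rid_counit :
    (Algebra.TensorProduct.rid ℚ ℚ H).toAlgHom.comp
        ((Algebra.TensorProduct.map (AlgHom.id ℚ H) εfdb).comp Δfdb) = AlgHom.id ℚ H := by
  refine algHom_ext fun n => ?_
  rw [← pBell_xv_succ_succ_one]
  exact rid_map_pBell _ Δfdb Δfdb_pBell εfdb εfdb_xv_zero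
    (fun j hj => εfdb_xv_of_ne_zero (by omega)) _ _

end FaaDiBruno

/-- The Faà di Bruno coproduct is coassociative and `ε` is a counit for it. -/
theorem stmt16 :
    (∀ a : MvPolynomial ℕ ℚ,
      (TensorProduct.assoc ℚ (MvPolynomial ℕ ℚ) (MvPolynomial ℕ ℚ) (MvPolynomial ℕ ℚ))
          ((TensorProduct.map Δfdb.toLinearMap LinearMap.id) (Δfdb a)) =
        (TensorProduct.map LinearMap.id Δfdb.toLinearMap) (Δfdb a)) ∧
    (∀ a : MvPolynomial ℕ ℚ,
      (TensorProduct.lid ℚ (MvPolynomial ℕ ℚ))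
          ((TensorProduct.map εfdb.toLinearMap LinearMap.id) (Δfdb a)) = a) ∧
    (∀ a : MvPolynomial ℕ ℚ,
      (TensorProduct.rid ℚ (MvPolynomial ℕ ℚ))
          ((TensorProduct.map LinearMap.id εfdb.toLinearMap) (Δfdb a)) = a) :=
  ⟨AlgHom.congr_fun Δfdb_coassoc, AlgHom.congr_fun εfdb_lid_counit,
    AlgHom.congr_fun εfdb_rid_counit⟩
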